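/- arXiv:1201.1401 — 4 statements merged into one kernel-verified Lean document; each statement's English description precedes it below -/
import Mathlib

section
/- Let π = (π₀, π₁) be an irreducible pair of bijections from a finite alphabet A (with d ≥ 2 elements) to {1,...,d}, and let Ω_π be the antisymmetric matrix with entries Ω_{αβ} = 1 if π₁(α) > π₁(β) and π₀(α) < π₀(β), Ω_{αβ} = -1 if π₁(α) < π₁(β) and π₀(α) > π₀(β), and 0 otherwise. Then the intersection of the strictly positive cone ℝ₊^A with the kernel of Ω_π is empty, i.e., no strictly positive vector λ satisfies Ω_π λ = 0. -/
/-!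
Expanding `Ω_π λ = 0` row by row says that for every letter `α` the total weight of the letters
before `α` is the same in the order `π₀` as in the order `π₁`. With positive weights that
partial sum is strictly increasing along either order, so `π₀` and `π₁` order the letters in the
same way and hence coincide, contradicting irreducibility already at `s = 1`.
-/

open Finset Matrix

section LowerSum

variable {ι β M : Type*} [Fintype ι] [LinearOrder β]

def lowerSum [AddCommMonoid M] (p : ι → β) (w : ι → M) (a : ι) : M :=
  ∑ b ∈ univ.filter (fun b => p b < p a), w b

variable [AddCommMonoid M] [PartialOrder M] [IsOrderedCancelAddMonoid M] {p : ι → β} {w : ι → M}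

theorem lowerSum_le_lowerSum (hw : ∀ i, 0 ≤ w i) {a b : ι} (h : p a ≤ p b) :
    lowerSum p w a ≤ lowerSum p w b :=
  sum_le_sum_of_subset_of_nonneg
    (monotone_filter_right _ fun _ _ hc => hc.trans_le h) fun i _ _ => hw i

theorem lowerSum_lt_lowerSum (hw : ∀ i, 0 < w i) {a b : ι} (h : p a < p b) :
    lowerSum p w a < lowerSum p w b :=
  sum_lt_sum_of_subset (monotone_filter_right _ fun _ _ hc => hc.trans h)
    (mem_filter.2 ⟨mem_univ a, h⟩) (by simp) (hw a) fun i _ _ => (hw i).le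

theorem lowerSum_lt_lowerSum_iff (hw : ∀ i, 0 < w i) {a b : ι} :
    lowerSum p w a < lowerSum p w b ↔ p a < p b :=
  ⟨fun h => lt_of_not_ge fun hba => (lowerSum_le_lowerSum (fun i => (hw i).le) hba).not_gt h,
    lowerSum_lt_lowerSum hw⟩

theorem lt_iff_lt_of_lowerSum_eq {q : ι → β} (hw : ∀ i, 0 < w i)
    (h : lowerSum p w = lowerSum q w) (a b : ι) : p a < p b ↔ q a < q b := by
  rw [← lowerSum_lt_lowerSum_iff hw, h, lowerSum_lt_lowerSum_iff hw]

end LowerSum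

section RauzyVeechMatrix

variable {ι β R : Type*} [LinearOrder β] [Ring R] {p q : ι → β}

theorem ite_lt_and_lt_eq_sub (hp : p.Injective) (hq : q.Injective) (a b : ι) :
    (if q b < q a ∧ p a < p b then (1 : R) else if q a < q b ∧ p b < p a then -1 else 0) =
      (if q b < q a then 1 else 0) - if p b < p a then 1 else 0 := by
  rcases eq_or_ne a b with rfl | hab
  · simp
  rcases (hp.ne hab).lt_or_gt with hpab | hpab <;>
    rcases (hq.ne hab).lt_or_gt with hqab | hqab <;>
    simp [hpab, hqab, hpab.not_gt, hqab.not_gt]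

theorem Matrix.mulVec_eq_lowerSum_sub_lowerSum [Fintype ι] (hp : p.Injective)
    (hq : q.Injective) (Ω : Matrix ι ι R)
    (hΩ : ∀ a b, Ω a b =
      if q b < q a ∧ p a < p b then (1 : R) else if q a < q b ∧ p b < p a then -1 else 0)
    (w : ι → R) : Ω *ᵥ w = lowerSum q w - lowerSum p w := by
  ext a
  simp only [mulVec, dotProduct, hΩ, ite_lt_and_lt_eq_sub hp hq, sub_mul, ite_mul, one_mul,
    zero_mul, sum_sub_distrib, ← sum_filter, lowerSum, Pi.sub_apply]

end RauzyVeechMatrix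

theorem Equiv.eq_of_lt_iff_lt {ι β : Type*} [LinearOrder β] [WellFoundedLT β] {p q : ι ≃ β}
    (h : ∀ a b, p a < p b ↔ q a < q b) : p = q := by
  let e : β ≃o β := ⟨p.symm.trans q, fun {x y} =>
    le_iff_le_iff_lt_iff_lt.2 <| by simpa using (h (p.symm y) (p.symm x)).symm⟩
  ext a
  simpa [e] using congr($(Subsingleton.elim e (OrderIso.refl β)) (p a)).symm

/-- For an irreducible combinatorial pair on an alphabet of `d ≥ 2`
letters, no strictly positive vector lies in the kernel of the Rauzy–Veech
antisymmetric matrix `Ω_π`. -/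
theorem stmt0 {d : ℕ} (hd : 2 ≤ d) (π₀ π₁ : Fin d ≃ Fin d)
    (hirr : ∀ s : ℕ, 1 ≤ s → s ≤ d - 1 →
      ¬ (∀ α : Fin d, ((π₀ α : ℕ) < s ↔ (π₁ α : ℕ) < s)))
    (Ω : Matrix (Fin d) (Fin d) ℝ)
    (hΩ : ∀ α β : Fin d, Ω α β =
      if π₁ β < π₁ α ∧ π₀ α < π₀ β then (1 : ℝ)
      else if π₁ α < π₁ β ∧ π₀ β < π₀ α then (-1 : ℝ) else 0)
    (lam : Fin d → ℝ) (hpos : ∀ α, 0 < lam α) :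
    Ω.mulVec lam ≠ 0 := by
  intro hker
  rw [Matrix.mulVec_eq_lowerSum_sub_lowerSum π₀.injective π₁.injective Ω hΩ, sub_eq_zero] at hker
  have hπ : π₀ = π₁ := Equiv.eq_of_lt_iff_lt (lt_iff_lt_of_lowerSum_eq hpos hker.symm)
  exact hirr 1 le_rfl (by omega) fun α => by rw [hπ]
end

section
/- Let π = (π₀, π₁) be an irreducible combinatorial pair on an alphabet A of d elements, let λ ∈ ℝ^A be strictly positive, and let α₀ ∈ A be the letter with π₀(α₀) = d. If Ω_π λ = 0, then ∑_{β : π₁(β) > π₁(α₀)} λ_β = 0, a contradiction since irreducibility ensures at least one β with π₁(β) > π₁(α₀); hence Ω_π λ ≠ 0. -/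
/-- For an irreducible combinatorial pair, with `α₀` the letter with
`π₀ α₀ = d` (top position), a strictly positive vector `λ` satisfies: if
`Ω_π λ = 0` then `∑_{π₁(β) > π₁(α₀)} λ_β = 0`, a contradiction; hence `Ω_π λ ≠ 0`. -/
theorem stmt1 {d : ℕ} (hd : 2 ≤ d) (π₀ π₁ : Fin d ≃ Fin d)
    (hirr : ∀ s : ℕ, 1 ≤ s → s ≤ d - 1 →
      ¬ (∀ α : Fin d, ((π₀ α : ℕ) < s ↔ (π₁ α : ℕ) < s)))
    (Ω : Matrix (Fin d) (Fin d) ℝ)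
    (hΩ : ∀ α β : Fin d, Ω α β =
      if π₁ β < π₁ α ∧ π₀ α < π₀ β then (1 : ℝ)
      else if π₁ α < π₁ β ∧ π₀ β < π₀ α then (-1 : ℝ) else 0)
    (lam : Fin d → ℝ) (hpos : ∀ α, 0 < lam α)
    (α₀ : Fin d) (hα₀ : (π₀ α₀ : ℕ) = d - 1) :
    (Ω.mulVec lam = 0 →
      ∑ β ∈ Finset.univ.filter (fun β => π₁ α₀ < π₁ β), lam β = 0) ∧
    Ω.mulVec lam ≠ 0 := by
  have key : Ω.mulVec lam α₀ =
      -∑ β ∈ Finset.univ.filter (fun β => π₁ α₀ < π₁ β), lam β := by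
    have hterm : ∀ β, Ω α₀ β * lam β = if π₁ α₀ < π₁ β then -lam β else 0 := by
      intro β
      rw [hΩ]
      have hle : (π₀ β : ℕ) ≤ d - 1 := by
        have := (π₀ β).isLt; omega
      by_cases h1 : π₁ α₀ < π₁ β
      · have hne : β ≠ α₀ := by rintro rfl; exact lt_irrefl _ h1
        have hne' : (π₀ β : ℕ) ≠ (π₀ α₀ : ℕ) := by
          intro h
          exact hne (π₀.injective (Fin.ext h))
        have h2 : π₀ β < π₀ α₀ := by
          rw [Fin.lt_def]; omega
        have hnot : ¬ (π₁ β < π₁ α₀ ∧ π₀ α₀ < π₀ β) := by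
          rintro ⟨ha, _⟩; exact absurd h1 (not_lt_of_gt ha)
        rw [if_neg hnot, if_pos ⟨h1, h2⟩, if_pos h1]
        ring
      · have hnot : ¬ (π₁ β < π₁ α₀ ∧ π₀ α₀ < π₀ β) := by
          rintro ⟨_, hb⟩
          rw [Fin.lt_def] at hb
          omega
        have hnot2 : ¬ (π₁ α₀ < π₁ β ∧ π₀ β < π₀ α₀) := by
          rintro ⟨ha, _⟩; exact h1 ha
        rw [if_neg hnot, if_neg hnot2, if_neg h1]
        ring
    unfold Matrix.mulVec dotProduct
    rw [Finset.sum_congr rfl (fun β _ => hterm β)]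
    rw [Finset.sum_ite, Finset.sum_const_zero, add_zero, ← Finset.sum_neg_distrib]
  have hSpos : 0 < ∑ β ∈ Finset.univ.filter (fun β => π₁ α₀ < π₁ β), lam β := by
    have h1 : (π₁ α₀ : ℕ) ≠ d - 1 := by
      intro h
      apply hirr (d - 1) (by omega) le_rfl
      intro α
      have h0le : (π₀ α : ℕ) < d := (π₀ α).isLt
      have h1le : (π₁ α : ℕ) < d := (π₁ α).isLt
      constructor
      · intro hlt
        have hne : α ≠ α₀ := by
          intro rfl'; subst rfl'; omega
        have : (π₁ α : ℕ) ≠ (π₁ α₀ : ℕ) := by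
          intro he; exact hne (π₁.injective (Fin.ext he))
        omega
      · intro hlt
        have hne : α ≠ α₀ := by
          intro rfl'; subst rfl'; omega
        have : (π₀ α : ℕ) ≠ (π₀ α₀ : ℕ) := by
          intro he; exact hne (π₀.injective (Fin.ext he))
        omega
    set β := π₁.symm ⟨d - 1, by omega⟩ with hβ
    have hmem : β ∈ Finset.univ.filter (fun β => π₁ α₀ < π₁ β) := by
      simp only [Finset.mem_filter, Finset.mem_univ, true_and, hβ,
        Equiv.apply_symm_apply, Fin.lt_def]
      have := (π₁ α₀).isLt
      omega
    exact Finset.sum_pos' (fun i _ => (hpos i).le) ⟨β, hmem, hpos β⟩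
  constructor
  · intro h0
    have : Ω.mulVec lam α₀ = 0 := by rw [h0]; rfl
    rw [key] at this
    linarith
  · intro h0
    have : Ω.mulVec lam α₀ = 0 := by rw [h0]; rfl
    rw [key] at this
    linarith
end

section
/- Let μ̃ > 1, C > 0, 0 < λ < 1, and let (a_n) be a nonnegative sequence satisfying a_n ≤ (1/μ̃) a_{n−1} + C λ^{√(n−1)} for all n ≥ 1. Then there exist C' > 0 and 0 < λ' < 1 such that a_n ≤ C' (λ')^{√n} for all n, i.e., a_n = O(λ^{√n}) up to replacing λ by some λ' < 1. -/
/-- A nonnegative sequence with `a_n ≤ (1/μ̃) a_{n−1} + C λ^{√(n−1)}`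
(`μ̃ > 1`, `0 < λ < 1`) decays stretched-exponentially: there are `C' > 0` and
`0 < λ' < 1` with `a_n ≤ C' (λ')^{√n}` for all `n`. -/
theorem stmt9 (μ C lam : ℝ) (hμ : 1 < μ) (hC : 0 < C)
    (hlam0 : 0 < lam) (hlam1 : lam < 1)
    (a : ℕ → ℝ) (ha : ∀ n, 0 ≤ a n)
    (hrec : ∀ n : ℕ, 1 ≤ n →
      a n ≤ (1 / μ) * a (n - 1) + C * lam ^ Real.sqrt ((n : ℝ) - 1)) :
    ∃ C' > (0 : ℝ), ∃ lam' : ℝ, 0 < lam' ∧ lam' < 1 ∧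
      ∀ n : ℕ, a n ≤ C' * lam' ^ Real.sqrt n := by
  have hμ0 : (0:ℝ) < μ := lt_trans one_pos hμ
  set ρ : ℝ := max lam ((1/μ + 1)/2) with hρdef
  have hinvμ : 1/μ < 1 := by rw [div_lt_one hμ0]; exact hμ
  have hρ1 : ρ < 1 := max_lt hlam1 (by linarith)
  have hρ0 : (0:ℝ) < ρ := lt_of_lt_of_le hlam0 (le_max_left _ _)
  have hμρ : 1/μ < ρ := lt_of_lt_of_le (by linarith) (le_max_right _ _)
  have hden : 0 < ρ - 1/μ := by linarith
  set K : ℝ := a 0 + C / (ρ - 1/μ) with hKdef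
  have hK0 : 0 < K := by
    have := ha 0
    have : 0 < C / (ρ - 1/μ) := div_pos hC hden
    have := ha 0
    positivity
  refine ⟨K, hK0, ρ, hρ0, hρ1, ?_⟩
  intro n
  induction n with
  | zero =>
    simp only [Nat.cast_zero, Real.sqrt_zero, Real.rpow_zero, mul_one]
    have h : 0 ≤ C / (ρ - 1/μ) := le_of_lt (div_pos hC hden)
    rw [hKdef]; linarith
  | succ n ih =>
    have hs : Real.sqrt ((n:ℝ) + 1) ≤ 1 + Real.sqrt n := by
      have hn : (0:ℝ) ≤ (n:ℝ) := Nat.cast_nonneg n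
      have h1 : ((n:ℝ) + 1) ≤ (1 + Real.sqrt n)^2 := by
        nlinarith [Real.sq_sqrt hn, Real.sqrt_nonneg (n:ℝ)]
      calc Real.sqrt ((n:ℝ) + 1) ≤ Real.sqrt ((1 + Real.sqrt n)^2) :=
            Real.sqrt_le_sqrt h1
        _ = 1 + Real.sqrt n := Real.sqrt_sq (by positivity)
    have hrec' := hrec (n+1) (Nat.le_add_left 1 n)
    simp only [Nat.add_sub_cancel, Nat.cast_add, Nat.cast_one, add_sub_cancel_right] at hrec'
    have hlamρ : lam ^ Real.sqrt (n:ℝ) ≤ ρ ^ Real.sqrt (n:ℝ) :=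
      Real.rpow_le_rpow hlam0.le (le_max_left _ _) (Real.sqrt_nonneg _)
    have hρn : 0 < ρ ^ Real.sqrt (n:ℝ) := Real.rpow_pos_of_pos hρ0 _
    have hKC : 1/μ * K + C ≤ K * ρ := by
      have h1 : C / (ρ - 1/μ) * (ρ - 1/μ) = C := div_mul_cancel₀ C (ne_of_gt hden)
      have h2 : K * (ρ - 1/μ) ≥ C := by
        have : a 0 * (ρ - 1/μ) ≥ 0 := mul_nonneg (ha 0) hden.le
        calc K * (ρ - 1/μ) = a 0 * (ρ - 1/μ) + C / (ρ - 1/μ) * (ρ - 1/μ) := by ring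
          _ ≥ C := by rw [h1]; linarith
      nlinarith
    have step1 : a (n+1) ≤ (1/μ * K + C) * ρ ^ Real.sqrt (n:ℝ) := by
      have h3 : (1/μ) * a n ≤ (1/μ) * (K * ρ ^ Real.sqrt (n:ℝ)) :=
        mul_le_mul_of_nonneg_left ih (by positivity)
      have h4 : C * lam ^ Real.sqrt (n:ℝ) ≤ C * ρ ^ Real.sqrt (n:ℝ) :=
        mul_le_mul_of_nonneg_left hlamρ hC.le
      calc a (n+1) ≤ (1/μ) * a n + C * lam ^ Real.sqrt (n:ℝ) := hrec'
        _ ≤ (1/μ) * (K * ρ ^ Real.sqrt (n:ℝ)) + C * ρ ^ Real.sqrt (n:ℝ) := by linarith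
        _ = (1/μ * K + C) * ρ ^ Real.sqrt (n:ℝ) := by ring
    have step2 : (1/μ * K + C) * ρ ^ Real.sqrt (n:ℝ) ≤ K * ρ * ρ ^ Real.sqrt (n:ℝ) :=
      mul_le_mul_of_nonneg_right hKC hρn.le
    have step3 : K * ρ * ρ ^ Real.sqrt (n:ℝ) = K * ρ ^ (1 + Real.sqrt (n:ℝ)) := by
      rw [Real.rpow_add hρ0, Real.rpow_one]; ring
    have step4 : ρ ^ (1 + Real.sqrt (n:ℝ)) ≤ ρ ^ Real.sqrt ((n:ℝ) + 1) := by
      have := Real.rpow_le_rpow_of_exponent_ge hρ0 hρ1.le hs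
      exact this
    calc a (n+1) ≤ (1/μ * K + C) * ρ ^ Real.sqrt (n:ℝ) := step1
      _ ≤ K * ρ * ρ ^ Real.sqrt (n:ℝ) := step2
      _ = K * ρ ^ (1 + Real.sqrt (n:ℝ)) := step3
      _ ≤ K * ρ ^ Real.sqrt ((n:ℝ) + 1) := mul_le_mul_of_nonneg_left step4 hK0.le
      _ = K * ρ ^ Real.sqrt ((n+1 : ℕ):ℝ) := by push_cast; ring_nf
end

section
/- Let μ̃ > 1, C > 0, 0 < λ < 1, and let (b_n) be a bounded nonnegative sequence satisfying b_{n+1} ≥ μ̃ b_n − C λ^{√n} for all n. Then there exist C' > 0 and 0 < λ' < 1 such that b_n ≤ C' (λ')^{√n} for all n. -/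
/-- A bounded nonnegative sequence with
`b_{n+1} ≥ μ̃ b_n − C λ^{√n}` (`μ̃ > 1`, `0 < λ < 1`) decays
stretched-exponentially. -/
theorem stmt10 (μ C lam M : ℝ) (hμ : 1 < μ) (hC : 0 < C)
    (hlam0 : 0 < lam) (hlam1 : lam < 1)
    (b : ℕ → ℝ) (hb0 : ∀ n, 0 ≤ b n) (hbM : ∀ n, b n ≤ M)
    (hrec : ∀ n : ℕ, μ * b n - C * lam ^ Real.sqrt n ≤ b (n + 1)) :
    ∃ C' > (0 : ℝ), ∃ lam' : ℝ, 0 < lam' ∧ lam' < 1 ∧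
      ∀ n : ℕ, b n ≤ C' * lam' ^ Real.sqrt n := by
  have hμ0 : (0:ℝ) < μ := lt_trans one_pos hμ
  have hμ1 : (0:ℝ) < μ - 1 := sub_pos.mpr hμ
  have hM : 0 ≤ M := le_trans (hb0 0) (hbM 0)
  set c := C / (μ - 1) with hc
  have hcpos : 0 < c := div_pos hC hμ1
  have key : ∀ k n : ℕ, b n ≤ M / μ ^ k + c * lam ^ Real.sqrt n := by
    intro k
    induction k with
    | zero =>
      intro n
      have hL : 0 ≤ lam ^ Real.sqrt n := Real.rpow_nonneg hlam0.le _
      have := mul_nonneg hcpos.le hL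
      simp only [pow_zero, div_one]
      linarith [hbM n]
    | succ k ih =>
      intro n
      set L := lam ^ Real.sqrt n with hLdef
      have hL : 0 ≤ L := Real.rpow_nonneg hlam0.le _
      have h1 : b n ≤ (b (n+1) + C * L) / μ := by
        rw [le_div_iff₀ hμ0]
        have := hrec n
        linarith
      have h2 : b (n+1) ≤ M / μ ^ k + c * lam ^ Real.sqrt ((n:ℝ)+1) := by
        have := ih (n+1)
        push_cast at this
        exact this
      have h3 : lam ^ Real.sqrt ((n:ℝ)+1) ≤ L := by
        apply Real.rpow_le_rpow_of_exponent_ge hlam0 hlam1.le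
        exact Real.sqrt_le_sqrt (by linarith)
      have h4 : b (n+1) ≤ M / μ ^ k + c * L := by
        have := mul_le_mul_of_nonneg_left h3 hcpos.le
        linarith
      have h5 : (M / μ ^ k + c * L + C * L) / μ = M / μ ^ (k+1) + c * L := by
        rw [hc]
        field_simp
        ring
      calc b n ≤ (b (n+1) + C * L) / μ := h1
        _ ≤ (M / μ ^ k + c * L + C * L) / μ := by gcongr
        _ = M / μ ^ (k+1) + c * L := h5
  refine ⟨c, hcpos, lam, hlam0, hlam1, fun n => ?_⟩
  have h1 : Filter.Tendsto (fun k : ℕ => M / μ ^ k) Filter.atTop (nhds 0) := by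
    have hinv : (0:ℝ) ≤ μ⁻¹ := by positivity
    have hinv1 : μ⁻¹ < 1 := inv_lt_one_of_one_lt₀ hμ
    have := (tendsto_pow_atTop_nhds_zero_of_lt_one hinv hinv1).const_mul M
    simpa [div_eq_mul_inv, inv_pow] using this
  have h2 : Filter.Tendsto (fun k : ℕ => M / μ ^ k + c * lam ^ Real.sqrt n)
      Filter.atTop (nhds (c * lam ^ Real.sqrt n)) := by
    simpa using h1.add tendsto_const_nhds
  exact ge_of_tendsto' h2 (fun k => key k n)
end
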